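/- Bounded variance: there exists a finite constant C, depending only on α, such that for every m ≥ 0 the variance of the crowding in-degree process satisfies ∑_{r=0}^{m} r² · P m r − μ_m² ≤ C. In particular the variance of the induced in-degree distribution at system size N (namely the distribution P (N−1)) remains bounded as N → ∞. -/

import Mathlib

open Finset Filter

/-- The crowding in-degree process: `P q m r` is the probability of having
accepted `r` edges after `m` proposals, with acceptance probability `q^r`. -/
noncomputable def crowdP (q : ℝ) : ℕ → ℕ → ℝ
  | 0, r => if r = 0 then 1 else 0
  | m + 1, r =>
      crowdP q m r * (1 - q ^ r) +
        (if r = 0 then 0 else crowdP q m (r - 1) * q ^ (r - 1))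

/-- Generating function `G m z = ∑_{r=0}^m P m r · z^r`. -/
noncomputable def crowdG (q : ℝ) (m : ℕ) (z : ℝ) : ℝ :=
  ∑ r ∈ Finset.range (m + 1), crowdP q m r * z ^ r

/-- Centering sequence `x_m = (1/α)·log(1 + (e^α − 1)·m)`. -/
noncomputable def crowdX (α : ℝ) (m : ℕ) : ℝ :=
  (1 / α) * Real.log (1 + (Real.exp α - 1) * m)

/-- Mean `μ_m = ∑_{r=0}^m r · P m r`. -/
noncomputable def crowdMu (q : ℝ) (m : ℕ) : ℝ :=
  ∑ r ∈ Finset.range (m + 1), (r : ℝ) * crowdP q m r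

lemma crowdP_nonneg {q : ℝ} (hq0 : 0 ≤ q) (hq1 : q ≤ 1) : ∀ m r, 0 ≤ crowdP q m r := by
  intro m
  induction m with
  | zero => intro r; simp [crowdP]; split <;> norm_num
  | succ m ih =>
    intro r
    have h1 : 0 ≤ 1 - q ^ r := by
      have := pow_le_one₀ hq0 hq1 (n := r); linarith
    have h2 : 0 ≤ q ^ r := pow_nonneg hq0 r
    simp only [crowdP]
    have := ih r
    have := ih (r - 1)
    split
    · positivity
    · positivity

lemma crowdP_eq_zero {q : ℝ} : ∀ m r, m < r → crowdP q m r = 0 := by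
  intro m
  induction m with
  | zero => intro r hr; simp [crowdP]; omega
  | succ m ih =>
    intro r hr
    have h0 : r ≠ 0 := by omega
    simp only [crowdP, if_neg h0]
    rw [ih r (by omega), ih (r - 1) (by omega)]
    ring

lemma crowdG_succ (q : ℝ) (m : ℕ) (z : ℝ) :
    crowdG q (m + 1) z = crowdG q m z + (z - 1) * crowdG q m (q * z) := by
  unfold crowdG
  have expand : ∑ r ∈ Finset.range (m + 2), crowdP q (m + 1) r * z ^ r =
      (∑ r ∈ Finset.range (m + 2), crowdP q m r * (1 - q ^ r) * z ^ r) +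
      (∑ r ∈ Finset.range (m + 2),
        (if r = 0 then 0 else crowdP q m (r - 1) * q ^ (r - 1)) * z ^ r) := by
    rw [← Finset.sum_add_distrib]
    refine Finset.sum_congr rfl fun r _ => ?_
    simp only [crowdP]; ring
  rw [expand]
  have h1 : ∑ r ∈ Finset.range (m + 2), crowdP q m r * (1 - q ^ r) * z ^ r =
      (∑ r ∈ Finset.range (m + 1), crowdP q m r * z ^ r) -
      (∑ r ∈ Finset.range (m + 1), crowdP q m r * (q * z) ^ r) := by
    rw [Finset.sum_range_succ, crowdP_eq_zero m (m + 1) (by omega), ← Finset.sum_sub_distrib]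
    rw [zero_mul, zero_mul, add_zero]
    refine Finset.sum_congr rfl fun r _ => ?_
    rw [mul_pow]; ring
  have h2 : ∑ r ∈ Finset.range (m + 2),
      (if r = 0 then 0 else crowdP q m (r - 1) * q ^ (r - 1)) * z ^ r =
      z * ∑ r ∈ Finset.range (m + 1), crowdP q m r * (q * z) ^ r := by
    have hshift := Finset.sum_range_succ'
      (fun r => (if r = 0 then (0:ℝ) else crowdP q m (r - 1) * q ^ (r - 1)) * z ^ r) (m + 1)
    rw [hshift]
    simp only [Nat.add_sub_cancel, Nat.succ_ne_zero, reduceIte, ite_false, ite_true,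
      zero_mul, add_zero]
    rw [Finset.mul_sum]
    exact Finset.sum_congr rfl fun r _ => by rw [mul_pow, pow_succ]; ring
  rw [h1, h2]; ring

lemma crowdG_one (q : ℝ) (m : ℕ) : crowdG q m 1 = 1 := by
  induction m with
  | zero => simp [crowdG, crowdP]
  | succ m ih => rw [crowdG_succ]; rw [ih]; ring

lemma crowdG_nonneg {q : ℝ} (hq0 : 0 ≤ q) (hq1 : q ≤ 1) (m : ℕ) {z : ℝ} (hz : 0 ≤ z) :
    0 ≤ crowdG q m z := by
  apply Finset.sum_nonneg
  intro r _
  exact mul_nonneg (crowdP_nonneg hq0 hq1 m r) (pow_nonneg hz r)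

lemma crowdG_inv {q : ℝ} (hq : q ≠ 0) (m : ℕ) :
    crowdG q m (1 / q) = 1 + (1 / q - 1) * m := by
  induction m with
  | zero => simp [crowdG, crowdP]
  | succ m ih =>
    rw [crowdG_succ, ih, mul_one_div_cancel hq, crowdG_one]
    push_cast; ring

lemma crowdG_sq_le {q : ℝ} (hq0 : 0 ≤ q) (hq1 : q ≤ 1) (m : ℕ) :
    crowdG q m q ^ 2 ≤ crowdG q m (q * q) := by
  have cs := Finset.sum_mul_sq_le_sq_mul_sq (Finset.range (m + 1))
    (fun r => Real.sqrt (crowdP q m r))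
    (fun r => Real.sqrt (crowdP q m r) * q ^ r)
  have e1 : ∀ r ∈ Finset.range (m + 1),
      Real.sqrt (crowdP q m r) * (Real.sqrt (crowdP q m r) * q ^ r) = crowdP q m r * q ^ r := by
    intro r _
    rw [← mul_assoc, Real.mul_self_sqrt (crowdP_nonneg hq0 hq1 m r)]
  have e2 : ∀ r ∈ Finset.range (m + 1),
      Real.sqrt (crowdP q m r) ^ 2 = crowdP q m r := fun r _ =>
    Real.sq_sqrt (crowdP_nonneg hq0 hq1 m r)
  have e3 : ∀ r ∈ Finset.range (m + 1),
      (Real.sqrt (crowdP q m r) * q ^ r) ^ 2 = crowdP q m r * (q * q) ^ r := by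
    intro r _
    rw [mul_pow, Real.sq_sqrt (crowdP_nonneg hq0 hq1 m r), ← pow_mul, show q * q = q ^ 2 by ring,
      ← pow_mul, Nat.mul_comm]
  rw [Finset.sum_congr rfl e1, Finset.sum_congr rfl e2, Finset.sum_congr rfl e3] at cs
  have hsum : ∑ r ∈ Finset.range (m + 1), crowdP q m r = 1 := by
    have := crowdG_one q m
    unfold crowdG at this
    simpa using this
  rw [hsum, one_mul] at cs
  unfold crowdG
  exact cs

lemma crowdG_q_le {q : ℝ} (hq0 : 0 < q) (hq1 : q < 1) (m : ℕ) :
    crowdG q m q ≤ 1 / (1 + (1 - q) * m) := by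
  induction m with
  | zero => simp [crowdG, crowdP, hq1.le]
  | succ m ih =>
    have hc0 : 0 < 1 - q := by linarith
    have hstep : crowdG q (m + 1) q ≤ crowdG q m q - (1 - q) * crowdG q m q ^ 2 := by
      rw [crowdG_succ]
      have := crowdG_sq_le hq0.le hq1.le m
      nlinarith
    set u := crowdG q m q with hu
    have hu0 : 0 ≤ u := crowdG_nonneg hq0.le hq1.le m hq0.le
    rcases Nat.eq_zero_or_pos m with rfl | hm
    · -- m = 0 : u = 1, so crowdG q 1 q ≤ 1 - (1-q) = q ≤ 1/(2-q)
      have hu1 : u = 1 := by simp [hu, crowdG, crowdP]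
      rw [hu1] at hstep
      have hG : crowdG q (0 + 1) q ≤ q := by nlinarith
      push_cast
      rw [le_div_iff₀ (by nlinarith)]
      nlinarith
    · have hm1 : (1 : ℝ) ≤ (m : ℝ) := by exact_mod_cast hm
      set c : ℝ := 1 - q with hcdef
      have hD : (0:ℝ) < 1 + c * m := by nlinarith
      have hD' : (0:ℝ) < 1 + c * ((m:ℝ) + 1) := by nlinarith
      have h2c : 2 * c ≤ 1 + c * m := by nlinarith
      have hA : u * (1 + c * m) ≤ 1 := (le_div_iff₀ hD).mp ih
      have hcu : c * u ≤ 1 / 2 := by nlinarith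
      have key : (u - c * u ^ 2) * (1 + c * ((m:ℝ) + 1)) ≤ 1 := by
        nlinarith [mul_nonneg (by linarith : (0:ℝ) ≤ 1 - u * (1 + c * (m:ℝ)))
          (by nlinarith : (0:ℝ) ≤ 1 - c * u), sq_nonneg (c * u)]
      push_cast
      rw [le_div_iff₀ hD']
      nlinarith [mul_le_mul_of_nonneg_right hstep hD'.le]

lemma sq_le_exp_pair {a t : ℝ} (ha : 0 < a) :
    t ^ 2 ≤ 4 / a ^ 2 * (Real.exp (a * t) + Real.exp (-(a * t))) := by
  have hE := Real.add_one_le_exp (a * |t| / 2)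
  have hEpos := Real.exp_pos (a * |t| / 2)
  have habs : Real.exp (a * |t|) = Real.exp (a * |t| / 2) ^ 2 := by
    rw [sq, ← Real.exp_add]; ring_nf
  have h0 : 0 ≤ a * |t| / 2 := by positivity
  have h1 : t ^ 2 ≤ 4 / a ^ 2 * Real.exp (a * |t|) := by
    rw [habs, div_mul_eq_mul_div, le_div_iff₀ (by positivity)]
    nlinarith [sq_abs t, abs_nonneg t]
  have h2 : Real.exp (a * |t|) ≤ Real.exp (a * t) + Real.exp (-(a * t)) := by
    rcases abs_cases t with ⟨h, _⟩ | ⟨h, _⟩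
    · rw [h]; linarith [Real.exp_pos (-(a * t))]
    · rw [h, mul_neg]; linarith [Real.exp_pos (a * t)]
  have h3 := mul_le_mul_of_nonneg_left h2 (show (0:ℝ) ≤ 4 / a ^ 2 by positivity)
  linarith


theorem stmt_11 (α : ℝ) (hα : 0 < α) :
    ∃ C : ℝ, ∀ m : ℕ,
      (∑ r ∈ Finset.range (m + 1), (r : ℝ) ^ 2 * crowdP (Real.exp (-α)) m r) -
        (crowdMu (Real.exp (-α)) m) ^ 2 ≤ C := by
  set q := Real.exp (-α) with hqdef
  have hq0 : 0 < q := Real.exp_pos _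
  have hq1 : q < 1 := by
    rw [hqdef, show (1:ℝ) = Real.exp 0 by simp]
    exact Real.exp_lt_exp.mpr (by linarith)
  have hea : 1 ≤ Real.exp α := Real.one_le_exp hα.le
  refine ⟨4 / α ^ 2 * (1 + Real.exp α), fun m => ?_⟩
  have hm0 : (0:ℝ) ≤ (m:ℝ) := Nat.cast_nonneg m
  set x := crowdX α m with hxdef
  set E : ℝ := 1 + (Real.exp α - 1) * m with hEdef
  have hEpos : 0 < E := by rw [hEdef]; nlinarith
  have hinvq : 1 / q = Real.exp α := by
    rw [hqdef, Real.exp_neg]; field_simp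
  have hxx : Real.exp (α * x) = E := by
    rw [hxdef, crowdX, show α * (1 / α * Real.log (1 + (Real.exp α - 1) * m)) =
      Real.log (1 + (Real.exp α - 1) * m) by field_simp, Real.exp_log (by rw [hEdef] at hEpos; exact hEpos)]
  have hP : ∀ r, 0 ≤ crowdP q m r := fun r => crowdP_nonneg hq0.le hq1.le m r
  have hsum : ∑ r ∈ Finset.range (m + 1), crowdP q m r = 1 := by
    have := crowdG_one q m
    unfold crowdG at this
    simpa using this
  have hGinv : crowdG q m (1 / q) = E := by
    rw [crowdG_inv hq0.ne' m, hinvq, hEdef]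
  have hGq : crowdG q m q ≤ 1 / (1 + (1 - q) * m) := crowdG_q_le hq0 hq1 m
  -- A = E[exp(α(R - x))] = 1
  have hA : ∑ r ∈ Finset.range (m + 1), Real.exp (α * ((r:ℝ) - x)) * crowdP q m r = 1 := by
    have step : ∀ r ∈ Finset.range (m + 1),
        Real.exp (α * ((r:ℝ) - x)) * crowdP q m r
          = E⁻¹ * (crowdP q m r * (1 / q) ^ r) := by
      intro r _
      rw [mul_sub, Real.exp_sub, mul_comm α ((r:ℝ)), Real.exp_nat_mul, hinvq, hxx]
      field_simp
    rw [Finset.sum_congr rfl step, ← Finset.mul_sum]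
    have : ∑ r ∈ Finset.range (m + 1), crowdP q m r * (1 / q) ^ r = E := hGinv
    rw [this, inv_mul_cancel₀ hEpos.ne']
  -- B = E[exp(α(x - R))] ≤ exp α
  have hB : ∑ r ∈ Finset.range (m + 1), Real.exp (α * (x - (r:ℝ))) * crowdP q m r
      ≤ Real.exp α := by
    have step : ∀ r ∈ Finset.range (m + 1),
        Real.exp (α * (x - (r:ℝ))) * crowdP q m r
          = E * (crowdP q m r * q ^ r) := by
      intro r _
      have hqr : Real.exp (α * (r:ℝ)) = (1 / q) ^ r := by
        rw [mul_comm, Real.exp_nat_mul, hinvq]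
      rw [mul_sub, Real.exp_sub, hxx, hqr]
      field_simp
      ring
      rw [← mul_pow, mul_inv_cancel₀ hq0.ne', one_pow, one_mul]
    rw [Finset.sum_congr rfl step, ← Finset.mul_sum]
    have hGE : (∑ r ∈ Finset.range (m + 1), crowdP q m r * q ^ r) = crowdG q m q := rfl
    rw [hGE]
    have hD : (0:ℝ) < 1 + (1 - q) * m := by nlinarith
    have h1 : E * crowdG q m q ≤ E * (1 / (1 + (1 - q) * m)) :=
      mul_le_mul_of_nonneg_left hGq hEpos.le
    have h2 : E * (1 / (1 + (1 - q) * m)) ≤ Real.exp α := by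
      rw [mul_one_div, div_le_iff₀ hD]
      have hq' : q * Real.exp α = 1 := by
        rw [hqdef, ← Real.exp_add]; simp
      nlinarith
    exact h1.trans h2
  -- variance expansion
  have hvar : (∑ r ∈ Finset.range (m + 1), ((r:ℝ) - x) ^ 2 * crowdP q m r)
      = (∑ r ∈ Finset.range (m + 1), (r:ℝ) ^ 2 * crowdP q m r)
        - 2 * x * crowdMu q m + x ^ 2 := by
    have step : ∀ r ∈ Finset.range (m + 1),
        ((r:ℝ) - x) ^ 2 * crowdP q m r
          = (r:ℝ) ^ 2 * crowdP q m r - 2 * x * ((r:ℝ) * crowdP q m r)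
            + x ^ 2 * crowdP q m r := fun r _ => by ring
    rw [Finset.sum_congr rfl step, Finset.sum_add_distrib, Finset.sum_sub_distrib,
      ← Finset.mul_sum, ← Finset.mul_sum, hsum, crowdMu, mul_one]
  -- second-moment bound
  have hbound : ∑ r ∈ Finset.range (m + 1), ((r:ℝ) - x) ^ 2 * crowdP q m r
      ≤ 4 / α ^ 2 * (1 + Real.exp α) := by
    have t1 : ∑ r ∈ Finset.range (m + 1), ((r:ℝ) - x) ^ 2 * crowdP q m r
        ≤ ∑ r ∈ Finset.range (m + 1),
            (4 / α ^ 2 * (Real.exp (α * ((r:ℝ) - x)) + Real.exp (-(α * ((r:ℝ) - x)))))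
              * crowdP q m r := by
      refine Finset.sum_le_sum fun r _ => ?_
      exact mul_le_mul_of_nonneg_right (sq_le_exp_pair hα) (hP r)
    have t2 : ∑ r ∈ Finset.range (m + 1),
          (4 / α ^ 2 * (Real.exp (α * ((r:ℝ) - x)) + Real.exp (-(α * ((r:ℝ) - x)))))
            * crowdP q m r
        = 4 / α ^ 2 * ((∑ r ∈ Finset.range (m + 1), Real.exp (α * ((r:ℝ) - x)) * crowdP q m r)
            + ∑ r ∈ Finset.range (m + 1), Real.exp (α * (x - (r:ℝ))) * crowdP q m r) := by
      rw [mul_add, Finset.mul_sum, Finset.mul_sum, ← Finset.sum_add_distrib]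
      refine Finset.sum_congr rfl fun r _ => ?_
      rw [show -(α * ((r:ℝ) - x)) = α * (x - (r:ℝ)) by ring]
      ring
    rw [t2] at t1
    have hC0 : (0:ℝ) ≤ 4 / α ^ 2 := by positivity
    have := mul_le_mul_of_nonneg_left (by linarith [hA, hB] :
      (∑ r ∈ Finset.range (m + 1), Real.exp (α * ((r:ℝ) - x)) * crowdP q m r)
        + (∑ r ∈ Finset.range (m + 1), Real.exp (α * (x - (r:ℝ))) * crowdP q m r)
        ≤ 1 + Real.exp α) hC0
    linarith
  nlinarith [sq_nonneg (crowdMu q m - x), hvar, hbound]
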